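/- arXiv:2511.20289 — 9 statements merged into one kernel-verified Lean document; each statement's English description precedes it below -/
import Mathlib

section
/- Let N_T > N_N > 0 be reals, and let a, b > 0. Define F(λ) = N_T·a/(N_T+λ) − N_N·b/(N_N+λ) for λ ≥ 0. If λ₀ > 0 satisfies F(λ₀) = 0, then the derivative F′(λ₀) is strictly positive. -/
/-! At a root λ₀ the two terms share a common value v > 0. The derivative of `c / (k + λ)` is
`-(c / (k + λ) / (k + λ))`, so `F'(λ₀) = v / (N_N + λ₀) - v / (N_T + λ₀)`, which is positive
because `N_N < N_T`. -/

theorem hasDerivAt_const_div_const_add {c k x : ℝ} (hx : k + x ≠ 0) :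
    HasDerivAt (fun y => c / (k + y)) (-(c / (k + x) / (k + x))) x := by
  have h : HasDerivAt (fun y => c / (k + y)) ((0 * (k + x) - c * 1) / (k + x) ^ 2) x :=
    (hasDerivAt_const x c).div ((hasDerivAt_id' x).const_add k) hx
  convert h using 1
  field_simp
  ring

theorem stmt_0_general (NT NN a b : ℝ) (hNN : 0 < NN) (hNT : NN < NT)
    (ha : 0 < a) (lam0 : ℝ) (hlam0 : 0 < lam0)
    (hF : NT * a / (NT + lam0) - NN * b / (NN + lam0) = 0) :
    0 < deriv (fun lam : ℝ => NT * a / (NT + lam) - NN * b / (NN + lam)) lam0 := by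
  have hN : 0 < NN + lam0 := by linarith
  have hden : NN + lam0 < NT + lam0 := by linarith
  have hT : 0 < NT + lam0 := hN.trans hden
  have hv : 0 < NT * a / (NT + lam0) := div_pos (mul_pos (hNN.trans hNT) ha) hT
  have hroot : NN * b / (NN + lam0) = NT * a / (NT + lam0) := (sub_eq_zero.mp hF).symm
  have hderiv := (hasDerivAt_const_div_const_add (c := NT * a) hT.ne').fun_sub
    (hasDerivAt_const_div_const_add (c := NN * b) hN.ne')
  rw [hderiv.deriv, hroot]
  have hcmp := div_lt_div_of_pos_left hv hN hden
  linarith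

theorem stmt_0 (NT NN a b : ℝ) (hNN : 0 < NN) (hNT : NN < NT)
    (ha : 0 < a) (hb : 0 < b) (lam0 : ℝ) (hlam0 : 0 < lam0)
    (hF : NT * a / (NT + lam0) - NN * b / (NN + lam0) = 0) :
    0 < deriv (fun lam : ℝ => NT * a / (NT + lam) - NN * b / (NN + lam)) lam0 :=
  stmt_0_general NT NN a b hNN hNT ha lam0 hlam0 hF
end

section
/- Let N_T > N_N > 0 and a, b > 0 be reals, and define F(λ) = N_T·a/(N_T+λ) − N_N·b/(N_N+λ) for λ ≥ 0. If F(λ₁) > 0 for some λ₁ ≥ 0, then F(λ₂) > 0 for every λ₂ > λ₁. Consequently the set {λ ≥ 0 : F(λ) > 0} is upward closed (an interval of the form [λ*, ∞) or (λ*, ∞) or empty or all of [0,∞)). -/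
/-!
Clearing the (positive) denominators, `A / (T + λ) - B / (N + λ) > 0` becomes the affine
inequality `B * T - A * N < (A - B) * λ`. Its slope is positive as soon as it holds at a single
`λ > -N`: then `B * (N + λ) ≤ B * (T + λ) < A * (N + λ)` because `B ≥ 0` and `N ≤ T`, so `B < A`.
An affine inequality with positive slope persists as `λ` grows.
-/

section

variable {A B T N l : ℝ}

theorem div_sub_div_pos_iff (hT : 0 < T + l) (hN : 0 < N + l) :
    0 < A / (T + l) - B / (N + l) ↔ B * T - A * N < (A - B) * l := by
  rw [sub_pos, div_lt_div_iff₀ hN hT]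
  constructor <;> intro h <;> linarith

theorem lt_of_div_sub_div_pos (hB : 0 ≤ B) (hNT : N ≤ T) (hN : 0 < N + l)
    (h : 0 < A / (T + l) - B / (N + l)) : B < A := by
  rw [div_sub_div_pos_iff (by linarith) hN] at h
  have hBT : B * N ≤ B * T := mul_le_mul_of_nonneg_left hNT hB
  have hmul : B * (N + l) < A * (N + l) := by linarith
  exact lt_of_mul_lt_mul_right hmul hN.le

theorem div_sub_div_pos_of_le (hB : 0 ≤ B) (hNT : N ≤ T) (hN : 0 < N + l) {l' : ℝ}
    (hl : l ≤ l') (h : 0 < A / (T + l) - B / (N + l)) :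
    0 < A / (T + l') - B / (N + l') := by
  have hAB : B < A := lt_of_div_sub_div_pos hB hNT hN h
  rw [div_sub_div_pos_iff (by linarith) hN] at h
  rw [div_sub_div_pos_iff (by linarith) (by linarith)]
  calc B * T - A * N < (A - B) * l := h
    _ ≤ (A - B) * l' := mul_le_mul_of_nonneg_left hl (sub_nonneg.2 hAB.le)

end

theorem stmt_1_general (NT NN a b : ℝ) (hNN : 0 < NN) (hNT : NN < NT)
    (hb : 0 < b)
    (F : ℝ → ℝ) (hFdef : ∀ lam, F lam = NT * a / (NT + lam) - NN * b / (NN + lam)) :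
    (∀ lam1 lam2 : ℝ, 0 ≤ lam1 → lam1 < lam2 → 0 < F lam1 → 0 < F lam2) ∧
    ∀ lam1 ∈ {lam : ℝ | 0 ≤ lam ∧ 0 < F lam}, ∀ lam2, lam1 ≤ lam2 →
      lam2 ∈ {lam : ℝ | 0 ≤ lam ∧ 0 < F lam} := by
  have hB : 0 ≤ NN * b := by positivity
  have upward : ∀ l1 l2 : ℝ, 0 ≤ l1 → l1 ≤ l2 → 0 < F l1 → 0 < F l2 := by
    intro l1 l2 h1 h12 hF
    rw [hFdef] at hF ⊢
    exact div_sub_div_pos_of_le hB hNT.le (by linarith) h12 hF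
  refine ⟨fun l1 l2 h1 h12 => upward l1 l2 h1 h12.le, ?_⟩
  rintro l1 ⟨h1, hF⟩ l2 h12
  exact ⟨h1.trans h12, upward l1 l2 h1 h12 hF⟩

theorem stmt_1 (NT NN a b : ℝ) (hNN : 0 < NN) (hNT : NN < NT)
    (ha : 0 < a) (hb : 0 < b)
    (F : ℝ → ℝ) (hFdef : ∀ lam, F lam = NT * a / (NT + lam) - NN * b / (NN + lam)) :
    (∀ lam1 lam2 : ℝ, 0 ≤ lam1 → lam1 < lam2 → 0 < F lam1 → 0 < F lam2) ∧
    ∀ lam1 ∈ {lam : ℝ | 0 ≤ lam ∧ 0 < F lam}, ∀ lam2, lam1 ≤ lam2 →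
      lam2 ∈ {lam : ℝ | 0 ≤ lam ∧ 0 < F lam} :=
  stmt_1_general NT NN a b hNN hNT hb F hFdef
end

section
/- Let N_T > N_N > 0, θ_T, θ_N > 0, and Ē ≥ 0 with N_T(θ_T − Ē) > N_N(θ_N + Ē) and θ_N − θ_T + 2Ē > 0. Define λ_L = N_T·N_N·(θ_N − θ_T + 2Ē) / (N_T(θ_T − Ē) − N_N(θ_N + Ē)). Then λ_L > 0, and for every λ > λ_L and every ε_T, ε_N ∈ [−Ē, Ē], one has N_T(θ_T + ε_T)/(N_T + λ) > N_N(θ_N + ε_N)/(N_N + λ). -/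
/-!
Both scores are increasing in their own noise, so the worst case for the trend side is
`(ε_T, ε_N) = (-Ē, Ē)`. Clearing the (positive) denominators, the worst-case gap is positive
exactly when `N_T N_N (q - p) < λ (N_T p - N_N q)` with `p = θ_T - Ē`, `q = θ_N + Ē`, i.e.
exactly when `λ > λ_L`.
-/

lemma div_add_lt_div_add_iff {a b p q lam : ℝ} (ha : 0 < a + lam) (hb : 0 < b + lam) :
    b * q / (b + lam) < a * p / (a + lam) ↔ a * b * (q - p) < lam * (a * p - b * q) := by
  rw [div_lt_div_iff₀ hb ha]
  constructor <;> intro h <;> linarith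

theorem stmt_2_general (NT NN tT tN E : ℝ) (hNN : 0 < NN) (hNT : NN < NT)
    (hden : NN * (tN + E) < NT * (tT - E))
    (hnum : 0 < tN - tT + 2 * E) :
    0 < NT * NN * (tN - tT + 2 * E) / (NT * (tT - E) - NN * (tN + E)) ∧
    ∀ lam > NT * NN * (tN - tT + 2 * E) / (NT * (tT - E) - NN * (tN + E)),
      ∀ eT ∈ Set.Icc (-E) E, ∀ eN ∈ Set.Icc (-E) E,
        NN * (tN + eN) / (NN + lam) < NT * (tT + eT) / (NT + lam) := by
  have hNT0 : 0 < NT := hNN.trans hNT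
  have hD : 0 < NT * (tT - E) - NN * (tN + E) := sub_pos.mpr hden
  have hL : 0 < NT * NN * (tN - tT + 2 * E) / (NT * (tT - E) - NN * (tN + E)) :=
    div_pos (by positivity) hD
  refine ⟨hL, fun lam hlam eT ⟨heT, _⟩ eN ⟨_, heN⟩ => ?_⟩
  have hlam0 : 0 < lam := hL.trans hlam
  have hworst : NN * (tN + E) / (NN + lam) < NT * (tT - E) / (NT + lam) := by
    rw [div_add_lt_div_add_iff (by linarith) (by linarith)]
    have := (div_lt_iff₀ hD).mp hlam
    linarith
  calc NN * (tN + eN) / (NN + lam) ≤ NN * (tN + E) / (NN + lam) := by gcongr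
    _ < NT * (tT - E) / (NT + lam) := hworst
    _ ≤ NT * (tT + eT) / (NT + lam) := by gcongr; linarith

theorem stmt_2 (NT NN tT tN E : ℝ) (hNN : 0 < NN) (hNT : NN < NT)
    (htT : 0 < tT) (htN : 0 < tN) (hE : 0 ≤ E)
    (hden : NN * (tN + E) < NT * (tT - E))
    (hnum : 0 < tN - tT + 2 * E) :
    0 < NT * NN * (tN - tT + 2 * E) / (NT * (tT - E) - NN * (tN + E)) ∧
    ∀ lam > NT * NN * (tN - tT + 2 * E) / (NT * (tT - E) - NN * (tN + E)),
      ∀ eT ∈ Set.Icc (-E) E, ∀ eN ∈ Set.Icc (-E) E,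
        NN * (tN + eN) / (NN + lam) < NT * (tT + eT) / (NT + lam) :=
  stmt_2_general NT NN tT tN E hNN hNT hden hnum
end

section
/- Let N_T > N_N > 0, θ_T, θ_N > 0, and Ē ≥ 0 with 1 < (θ_N − Ē)/(θ_T + Ē) < N_T/N_N. Define λ_U = N_T·N_N·((θ_N − Ē) − (θ_T + Ē)) / (N_T(θ_T + Ē) − N_N(θ_N − Ē)). Then λ_U > 0, and for every λ ∈ [0, λ_U] and every ε_T, ε_N ∈ [−Ē, Ē], one has N_T(θ_T + ε_T)/(N_T + λ) ≤ N_N(θ_N + ε_N)/(N_N + λ). -/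
/-!
Write `a = θ_T + Ē` and `b = θ_N − Ē`. Both sides of the inequality are monotone in the noise, so it
suffices to treat the worst case `N_T a / (N_T + λ) ≤ N_N b / (N_N + λ)`. Clearing denominators, this is
the linear condition `λ (N_T a − N_N b) ≤ N_T N_N (b − a)`, and the hypotheses say exactly that
`a < b` and `N_N b < N_T a`, so it holds precisely for `λ ≤ λ_U`.
-/

section Threshold

variable {x y a b lam : ℝ}

theorem mul_div_add_le_mul_div_add_iff (hx : 0 < x + lam) (hy : 0 < y + lam) :
    x * a / (x + lam) ≤ y * b / (y + lam) ↔ lam * (x * a - y * b) ≤ x * y * (b - a) := by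
  rw [div_le_div_iff₀ hx hy]
  constructor <;> intro h <;> linarith

theorem threshold_pos (hx : 0 < x) (hy : 0 < y) (hab : a < b) (hgap : y * b < x * a) :
    0 < x * y * (b - a) / (x * a - y * b) :=
  div_pos (mul_pos (mul_pos hx hy) (sub_pos.mpr hab)) (sub_pos.mpr hgap)

theorem mul_div_add_le_mul_div_add_of_le_threshold (hx : 0 < x) (hy : 0 < y)
    (hgap : y * b < x * a) (hl0 : 0 ≤ lam) (hl : lam ≤ x * y * (b - a) / (x * a - y * b)) :
    x * a / (x + lam) ≤ y * b / (y + lam) := by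
  rw [mul_div_add_le_mul_div_add_iff (by linarith) (by linarith)]
  exact (le_div_iff₀ (sub_pos.mpr hgap)).mp hl

end Threshold

theorem stmt_3_general (NT NN tT tN E : ℝ) (hNN : 0 < NN) (hNT : NN < NT)
    (htT : 0 < tT) (hE : 0 ≤ E)
    (h1 : 1 < (tN - E) / (tT + E)) (h2 : (tN - E) / (tT + E) < NT / NN) :
    0 < NT * NN * ((tN - E) - (tT + E)) / (NT * (tT + E) - NN * (tN - E)) ∧
    ∀ lam ∈ Set.Icc 0 (NT * NN * ((tN - E) - (tT + E)) / (NT * (tT + E) - NN * (tN - E))),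
      ∀ eT ∈ Set.Icc (-E) E, ∀ eN ∈ Set.Icc (-E) E,
        NT * (tT + eT) / (NT + lam) ≤ NN * (tN + eN) / (NN + lam) := by
  have hNT0 : 0 < NT := hNN.trans hNT
  have hTE : 0 < tT + E := by linarith
  have hab : tT + E < tN - E := (one_lt_div hTE).mp h1
  have hgap : NN * (tN - E) < NT * (tT + E) := by
    rw [div_lt_div_iff₀ hTE hNN] at h2
    linarith
  refine ⟨threshold_pos hNT0 hNN hab hgap, ?_⟩
  rintro lam ⟨hl0, hl⟩ eT ⟨-, heT⟩ eN ⟨heN, -⟩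
  calc NT * (tT + eT) / (NT + lam)
      ≤ NT * (tT + E) / (NT + lam) := by gcongr
    _ ≤ NN * (tN - E) / (NN + lam) :=
        mul_div_add_le_mul_div_add_of_le_threshold hNT0 hNN hgap hl0 hl
    _ ≤ NN * (tN + eN) / (NN + lam) := by
        have : 0 < NN + lam := by linarith
        gcongr
        linarith

theorem stmt_3 (NT NN tT tN E : ℝ) (hNN : 0 < NN) (hNT : NN < NT)
    (htT : 0 < tT) (htN : 0 < tN) (hE : 0 ≤ E)
    (h1 : 1 < (tN - E) / (tT + E)) (h2 : (tN - E) / (tT + E) < NT / NN) :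
    0 < NT * NN * ((tN - E) - (tT + E)) / (NT * (tT + E) - NN * (tN - E)) ∧
    ∀ lam ∈ Set.Icc 0 (NT * NN * ((tN - E) - (tT + E)) / (NT * (tT + E) - NN * (tN - E))),
      ∀ eT ∈ Set.Icc (-E) E, ∀ eN ∈ Set.Icc (-E) E,
        NT * (tT + eT) / (NT + lam) ≤ NN * (tN + eN) / (NN + lam) :=
  stmt_3_general NT NN tT tN E hNN hNT htT hE h1 h2
end

section
/- Let N_T > N_N > 0, θ_T, θ_N > 0, and a, b > 0. Define x(λ) = N_T·a/(N_T+λ), y(λ) = N_N·b/(N_N+λ), and h(λ) = (θ_T·x(λ) + θ_N·y(λ))/√(x(λ)² + y(λ)²) for λ ≥ 0. If x(λ)/y(λ) > θ_T/θ_N for all λ in an interval I ⊆ [0, ∞), then h is strictly decreasing on I. -/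
/-!
Since `y > 0`, `h = g ∘ (x / y)` with `g r = (θ_T r + θ_N) / √(r² + 1) = ⟨(θ_T, θ_N), (r, 1)⟩ / ‖(r, 1)‖`,
and `g` decreases once `(r, 1)` has passed the direction of `(θ_T, θ_N)`, i.e. for `r ≥ θ_T / θ_N`.
The ratio `x / y` is a positive multiple of `(N_N + λ) / (N_T + λ)`, increasing because `N_N < N_T`.
-/

open Set

theorem strictMonoOn_add_div_add {c d : ℝ} (hcd : c < d) :
    StrictMonoOn (fun l => (c + l) / (d + l)) (Ioi (-d)) := by
  intro l₁ h₁ l₂ h₂ hlt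
  rw [mem_Ioi] at h₁ h₂
  rw [div_lt_div_iff₀ (by linarith) (by linarith)]
  nlinarith

theorem strictAntiOn_linear_div_sqrt_sq_add_one {p q : ℝ} (hp : 0 ≤ p) (hq : 0 < q) :
    StrictAntiOn (fun r => (p * r + q) / √(r ^ 2 + 1)) (Ici (p / q)) := by
  intro r₁ h₁ r₂ h₂ hlt
  rw [mem_Ici, div_le_iff₀ hq] at h₁ h₂
  have hr₁ : 0 ≤ r₁ := by nlinarith
  have hpr₁ : 0 < p * r₁ + q := by positivity
  have hpr₂ : 0 < p * r₂ + q := by nlinarith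
  have sq_diff_eq : (p * r₁ + q) ^ 2 * (r₂ ^ 2 + 1) - (p * r₂ + q) ^ 2 * (r₁ ^ 2 + 1)
      = (r₂ - r₁) * ((q * r₁ - p) * (p * r₂ + q) + (q * r₂ - p) * (p * r₁ + q)) := by ring
  have sq_diff_pos : 0 < (r₂ - r₁) * ((q * r₁ - p) * (p * r₂ + q) + (q * r₂ - p) * (p * r₁ + q)) := by
    apply mul_pos (by linarith)
    apply add_pos_of_nonneg_of_pos
    · exact mul_nonneg (by linarith) hpr₂.le
    · exact mul_pos (by nlinarith) hpr₁
  show (p * r₂ + q) / √(r₂ ^ 2 + 1) < (p * r₁ + q) / √(r₁ ^ 2 + 1)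
  rw [div_lt_div_iff₀ (by positivity) (by positivity)]
  refine lt_of_pow_lt_pow_left₀ 2 (by positivity) ?_
  rw [mul_pow, mul_pow, Real.sq_sqrt (by positivity), Real.sq_sqrt (by positivity)]
  linarith

theorem linear_div_sqrt_sq_add_sq_eq {x y : ℝ} (p q : ℝ) (hy : 0 < y) :
    (p * x + q * y) / √(x ^ 2 + y ^ 2) = (p * (x / y) + q) / √((x / y) ^ 2 + 1) := by
  have hsqrt : √(x ^ 2 + y ^ 2) = y * √((x / y) ^ 2 + 1) := by
    calc √(x ^ 2 + y ^ 2) = √(y ^ 2 * ((x / y) ^ 2 + 1)) := by congr 1; field_simp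
      _ = y * √((x / y) ^ 2 + 1) := by rw [Real.sqrt_mul (sq_nonneg y), Real.sqrt_sq hy.le]
  rw [hsqrt]
  field_simp

theorem stmt_6_general (NT NN tT tN a b : ℝ) (hNN : 0 < NN) (hNT : NN < NT)
    (htT : 0 < tT) (htN : 0 < tN) (ha : 0 < a) (hb : 0 < b)
    (x y h : ℝ → ℝ)
    (hx : ∀ lam, x lam = NT * a / (NT + lam))
    (hy : ∀ lam, y lam = NN * b / (NN + lam))
    (hh : ∀ lam, h lam = (tT * x lam + tN * y lam) / Real.sqrt (x lam ^ 2 + y lam ^ 2))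
    (I : Set ℝ) (hI : I ⊆ Set.Ici 0)
    (hratio : ∀ lam ∈ I, tT / tN < x lam / y lam) :
    StrictAntiOn h I := by
  have hNT_pos : 0 < NT := hNN.trans hNT
  have hmem : ∀ lam ∈ I, -NN < lam := fun lam hlam => by linarith [mem_Ici.mp (hI hlam)]
  have hy_pos : ∀ lam ∈ I, 0 < y lam := fun lam hlam => by
    rw [hy]; have := hmem lam hlam; exact div_pos (by positivity) (by linarith)
  have hratio_eq : ∀ lam ∈ I, x lam / y lam = NT * a / (NN * b) * ((NN + lam) / (NT + lam)) :=
    fun lam hlam => by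
      have := hmem lam hlam
      rw [hx, hy]
      field_simp
  have hratio_mono : StrictMonoOn (fun lam => x lam / y lam) I := by
    intro l₁ h₁ l₂ h₂ hlt
    simp only [hratio_eq l₁ h₁, hratio_eq l₂ h₂]
    refine mul_lt_mul_of_pos_left ?_ (by positivity)
    exact strictMonoOn_add_div_add hNT (mem_Ioi.mpr (by linarith [hmem l₁ h₁]))
      (mem_Ioi.mpr (by linarith [hmem l₂ h₂])) hlt
  have hh_comp : EqOn h ((fun r => (tT * r + tN) / √(r ^ 2 + 1)) ∘ fun lam => x lam / y lam) I :=
    fun lam hlam => by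
      rw [hh, linear_div_sqrt_sq_add_sq_eq tT tN (hy_pos lam hlam), Function.comp_apply]
  refine StrictAntiOn.congr ?_ hh_comp.symm
  exact (strictAntiOn_linear_div_sqrt_sq_add_one htT.le htN).comp_strictMonoOn hratio_mono
    fun lam hlam => (hratio lam hlam).le

theorem stmt_6 (NT NN tT tN a b : ℝ) (hNN : 0 < NN) (hNT : NN < NT)
    (htT : 0 < tT) (htN : 0 < tN) (ha : 0 < a) (hb : 0 < b)
    (x y h : ℝ → ℝ)
    (hx : ∀ lam, x lam = NT * a / (NT + lam))
    (hy : ∀ lam, y lam = NN * b / (NN + lam))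
    (hh : ∀ lam, h lam = (tT * x lam + tN * y lam) / Real.sqrt (x lam ^ 2 + y lam ^ 2))
    (I : Set ℝ) (hI : I ⊆ Set.Ici 0) (hIconn : I.OrdConnected)
    (hratio : ∀ lam ∈ I, tT / tN < x lam / y lam) :
    StrictAntiOn h I :=
  stmt_6_general NT NN tT tN a b hNN hNT htT htN ha hb x y h hx hy hh I hI hratio
end

section
/- Let N_T > N_N > 0 and θ_T, θ_N > 0, and suppose Ē satisfies 0 ≤ Ē < ((N_T − N_N)/(N_T + N_N))·min(θ_T, θ_N). Then there exists α > 0 such that for all ε_T, ε_N ∈ [−Ē, Ē], the limit ratio C(ε_T, ε_N) = N_T(θ_T + ε_T)/(N_N(θ_N + ε_N)) satisfies C(ε_T, ε_N) ≥ (θ_T/θ_N)·(2N_N + α(N_T + N_N))/(2N_T − α(N_T + N_N)) > θ_T/θ_N. Consequently, there exists a finite λ̄ ≥ 0 such that for all λ > λ̄ and all ε_T, ε_N ∈ [−Ē, Ē], A(λ; ε_T, ε_N) = C(ε_T, ε_N)·(N_N + λ)/(N_T + λ) > θ_T/θ_N. -/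
/-!
Over the noise box `[-E, E]²` the limit ratio `C(eT, eN) = NT (tT + eT) / (NN (tN + eN))` is
smallest at the corner `eT = -E`, `eN = E`, and the noise bound is exactly what makes this
worst case `K` still exceed `tT / tN`. Since `α ↦ (2 NN + α (NT + NN)) / (2 NT - α (NT + NN))`
takes every value above `NN / NT` at some `α > 0`, one chooses `α` so that `tT / tN` times it
is `K`. Finally `(NN + λ) / (NT + λ) → 1`, so `K (NN + λ) / (NT + λ)`, a lower bound for every
`A(λ; eT, eN)`, exceeds `tT / tN` for all large `λ`.
-/

open Filter Topology Set

lemma div_lt_worst_ratio {NT NN tT tN E : ℝ} (hNN : 0 < NN) (hNT : NN < NT)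
    (htT : 0 < tT) (htN : 0 < tN) (hE0 : 0 ≤ E)
    (hE : E < (NT - NN) / (NT + NN) * min tT tN) :
    tT / tN < NT * (tT - E) / (NN * (tN + E)) := by
  have hS : 0 < NT + NN := by linarith
  have hE' : E * (NT + NN) < (NT - NN) * min tT tN := by
    rwa [div_mul_eq_mul_div, lt_div_iff₀ hS] at hE
  have hweights : NN * tT + NT * tN ≤ (NT + NN) * max tT tN := by
    nlinarith [le_max_left tT tN, le_max_right tT tN]
  have key : E * (NN * tT + NT * tN) < (NT - NN) * (tT * tN) :=
    calc E * (NN * tT + NT * tN) ≤ E * (NT + NN) * max tT tN := by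
          rw [mul_assoc]; exact mul_le_mul_of_nonneg_left hweights hE0
      _ < (NT - NN) * min tT tN * max tT tN :=
          mul_lt_mul_of_pos_right hE' (htT.trans_le (le_max_left _ _))
      _ = (NT - NN) * (tT * tN) := by rw [mul_assoc, min_mul_max]
  rw [div_lt_div_iff₀ htN (by positivity)]
  linarith

lemma worst_ratio_le {NT NN tT tN E eT eN : ℝ} (hNT : 0 ≤ NT) (hNN : 0 < NN)
    (hEtT : E ≤ tT) (hEtN : E < tN) (heT : eT ∈ Icc (-E) E) (heN : eN ∈ Icc (-E) E) :
    NT * (tT - E) / (NN * (tN + E)) ≤ NT * (tT + eT) / (NN * (tN + eN)) := by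
  obtain ⟨heT, -⟩ := heT
  obtain ⟨heN, heN'⟩ := heN
  have htN : 0 < tN + eN := by linarith
  refine div_le_div₀ (mul_nonneg hNT (by linarith)) ?_ (mul_pos hNN htN) ?_
  · gcongr; linarith
  · gcongr

lemma exists_pos_add_div_sub_eq {NT NN r : ℝ} (hNN : 0 < NN) (hNT : 0 < NT)
    (hr : NN < NT * r) :
    ∃ α > 0, (2 * NN + α * (NT + NN)) / (2 * NT - α * (NT + NN)) = r := by
  have hr0 : 0 < r := pos_of_mul_pos_right (hNN.trans hr) hNT.le
  refine ⟨2 * (NT * r - NN) / ((NT + NN) * (1 + r)), by apply div_pos <;> nlinarith, ?_⟩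
  have hden : 2 * NT - 2 * (NT * r - NN) / ((NT + NN) * (1 + r)) * (NT + NN)
      = 2 * (NT + NN) / (1 + r) := by
    field_simp
    ring
  rw [hden, div_eq_iff (by positivity)]
  field_simp
  ring

lemma tendsto_add_div_add_atTop (a b : ℝ) :
    Tendsto (fun x : ℝ => (a + x) / (b + x)) atTop (𝓝 1) := by
  have h : Tendsto (fun x : ℝ => 1 + (a - b) / (b + x)) atTop (𝓝 (1 + 0)) :=
    tendsto_const_nhds.add
      (tendsto_const_nhds.div_atTop (tendsto_atTop_add_const_left _ b tendsto_id))
  rw [add_zero] at h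
  refine h.congr' ?_
  filter_upwards [eventually_gt_atTop (-b)] with x hx
  have : b + x ≠ 0 := by linarith
  field_simp
  ring

theorem stmt_15 (NT NN tT tN E : ℝ) (hNN : 0 < NN) (hNT : NN < NT)
    (htT : 0 < tT) (htN : 0 < tN)
    (hE0 : 0 ≤ E) (hE : E < (NT - NN) / (NT + NN) * min tT tN) :
    ∃ α > 0,
      (∀ eT ∈ Set.Icc (-E) E, ∀ eN ∈ Set.Icc (-E) E,
        tT / tN * ((2 * NN + α * (NT + NN)) / (2 * NT - α * (NT + NN)))
            ≤ NT * (tT + eT) / (NN * (tN + eN)) ∧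
        tT / tN < tT / tN * ((2 * NN + α * (NT + NN)) / (2 * NT - α * (NT + NN)))) ∧
      ∃ lambar ≥ (0 : ℝ), ∀ lam > lambar,
        ∀ eT ∈ Set.Icc (-E) E, ∀ eN ∈ Set.Icc (-E) E,
          tT / tN < NT * (tT + eT) / (NN * (tN + eN)) * ((NN + lam) / (NT + lam)) := by
  have hNT0 : 0 < NT := hNN.trans hNT
  have hE_min : E < min tT tN := hE.trans_le <| mul_le_of_le_one_left (lt_min htT htN).le <|
    (div_le_one (by linarith)).mpr (by linarith)
  set K := NT * (tT - E) / (NN * (tN + E))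
  have hK : tT / tN < K := div_lt_worst_ratio hNN hNT htT htN hE0 hE
  have hK_le : ∀ eT ∈ Icc (-E) E, ∀ eN ∈ Icc (-E) E, K ≤ NT * (tT + eT) / (NN * (tN + eN)) :=
    fun eT heT eN heN => worst_ratio_le hNT0.le hNN (hE_min.trans_le (min_le_left _ _)).le
      (hE_min.trans_le (min_le_right _ _)) heT heN
  have hc : 0 < tT / tN := div_pos htT htN
  obtain ⟨α, hα, hαK⟩ := exists_pos_add_div_sub_eq (r := K / (tT / tN)) hNN hNT0 <|
    hNT.trans (lt_mul_of_one_lt_right hNT0 ((one_lt_div hc).mpr hK))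
  have hαK' : tT / tN * ((2 * NN + α * (NT + NN)) / (2 * NT - α * (NT + NN))) = K := by
    rw [hαK, mul_div_cancel₀ _ hc.ne']
  refine ⟨α, hα, fun eT heT eN heN => ⟨hαK' ▸ hK_le eT heT eN heN, hαK' ▸ hK⟩, ?_⟩
  have hlim : Tendsto (fun lam => K * ((NN + lam) / (NT + lam))) atTop (𝓝 K) := by
    simpa using (tendsto_add_div_add_atTop NN NT).const_mul K
  obtain ⟨L, hL⟩ := eventually_atTop.mp (hlim.eventually_const_lt hK)
  refine ⟨max L 0, le_max_right _ _, fun lam hlam eT heT eN heN => ?_⟩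
  have hlam0 : 0 < lam := (le_max_right _ _).trans_lt hlam
  calc tT / tN < K * ((NN + lam) / (NT + lam)) := hL lam ((le_max_left _ _).trans hlam.le)
    _ ≤ _ := mul_le_mul_of_nonneg_right (hK_le eT heT eN heN) (by positivity)
end

section
/- Let N_T > N_N > 0 and θ_T, θ_N > 0, and suppose (θ_N − Ē)/(θ_T + Ē) ≥ N_T/N_N. Then for every λ ≥ 0 and every ε_T, ε_N ∈ [−Ē, Ē], one has N_T(θ_T + ε_T)/(N_T + λ) ≤ N_N(θ_N + ε_N)/(N_N + λ). -/
theorem stmt_17 (NT NN tT tN E : ℝ) (hNN : 0 < NN) (hNT : NN < NT)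
    (htT : 0 < tT) (htN : 0 < tN) (hE0 : 0 ≤ E)
    (hE : NT / NN ≤ (tN - E) / (tT + E)) :
    ∀ lam : ℝ, 0 ≤ lam → ∀ eT ∈ Set.Icc (-E) E, ∀ eN ∈ Set.Icc (-E) E,
      NT * (tT + eT) / (NT + lam) ≤ NN * (tN + eN) / (NN + lam) := by
  intro lam hlam eT heT eN heN
  obtain ⟨heT1, heT2⟩ := heT
  obtain ⟨heN1, heN2⟩ := heN
  have htTE : 0 < tT + E := by linarith
  have h1 : NT * (tT + E) ≤ (tN - E) * NN := (div_le_div_iff₀ hNN htTE).mp hE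
  have hNTl : 0 < NT + lam := by linarith
  have hNNl : 0 < NN + lam := by linarith
  have hnum : NT * (tT + eT) ≤ NN * (tN + eN) := by nlinarith
  have hpos : 0 ≤ NN * (tN + eN) := by nlinarith
  exact div_le_div₀ hpos hnum hNNl (by linarith)
end

section
/- Let C > 1, θ_T, θ_N > 0, Ē ≥ 0, and 0 < α < 1/2. For N ≥ 1 define N_T = N, N_N = N/C, and let Λ(N) = [N_T·N_N·(Ē(1 + 1/N_T)θ_T·N_N^{α−1/2} + Ē·θ_N·N_T^{α−1/2} + θ_Nθ_T/N_T)] / [θ_Tθ_N(N_T − N_N(1 + 1/N_T)) − Ē·θ_N·N_T^{α+1/2} − Ē(1 + 1/N_T)θ_T·N_N^{α+1/2}]. Then there exist constants K > 0 and N₀ such that for all N ≥ N₀ the denominator is positive and 0 < Λ(N) ≤ K·N^{α + 1/2}; i.e., Λ(N) = O(N^{1/2 + α}). -/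
/-!
The denominator is `tT tN (1 - 1/C) N` plus terms of order `N^(α + 1/2) = o(N)`, so
`den N / N → tT tN (1 - 1/C) > 0`; the numerator is of order `N^(α + 3/2)`, with
`num N / N^(α + 3/2)` convergent. Hence `Λ N / N^(α + 1/2)` converges, and is eventually
below any constant exceeding its limit.
-/

open Filter Topology Real

theorem tendsto_rpow_atTop_nhds_zero_of_neg {s : ℝ} (hs : s < 0) :
    Tendsto (fun x : ℝ => x ^ s) atTop (𝓝 0) := by
  simpa using tendsto_rpow_neg_atTop (neg_pos.2 hs)

theorem eventually_div_le_mul_rpow {num den : ℝ → ℝ} {s a c : ℝ} (hc : 0 < c)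
    (hnum : Tendsto (fun N => num N / N ^ (s + 1)) atTop (𝓝 a))
    (hden : Tendsto (fun N => den N / N) atTop (𝓝 c))
    (hpos : ∀ᶠ N in atTop, 0 < num N) :
    ∃ K > 0, ∀ᶠ N in atTop, 0 < den N ∧ 0 < num N / den N ∧ num N / den N ≤ K * N ^ s := by
  have hratio : Tendsto (fun N => num N / den N / N ^ s) atTop (𝓝 (a / c)) := by
    refine (hnum.div hden hc.ne').congr' ?_
    filter_upwards [eventually_gt_atTop 0] with N hN
    rw [Pi.div_apply, rpow_add_one hN.ne']
    field_simp
  refine ⟨|a / c| + 1, by positivity, ?_⟩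
  filter_upwards [eventually_gt_atTop 0, hpos, hden.eventually_const_lt hc,
    hratio.eventually_lt_const ((le_abs_self _).trans_lt (lt_add_one _))]
    with N hN hnumN hdenN hratioN
  have hdenN : 0 < den N := (div_pos_iff_of_pos_right hN).1 hdenN
  refine ⟨hdenN, div_pos hnumN hdenN, ?_⟩
  exact ((div_lt_iff₀ (rpow_pos_of_pos hN s)).1 hratioN).le

section Threshold

variable (C tT tN E α : ℝ)

noncomputable def thresholdNum (N : ℝ) : ℝ :=
  N * (N / C) * (E * (1 + 1 / N) * tT * (N / C) ^ (α - 1 / 2) + E * tN * N ^ (α - 1 / 2)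
    + tN * tT / N)

noncomputable def thresholdDen (N : ℝ) : ℝ :=
  tT * tN * (N - N / C * (1 + 1 / N)) - E * tN * N ^ (α + 1 / 2)
    - E * (1 + 1 / N) * tT * (N / C) ^ (α + 1 / 2)

theorem thresholdNum_pos (hC : 0 < C) (htT : 0 < tT) (htN : 0 < tN) (hE : 0 ≤ E)
    {N : ℝ} (hN : 0 < N) : 0 < thresholdNum C tT tN E α N := by
  unfold thresholdNum
  positivity

theorem tendsto_thresholdNum_div_rpow (hC : 0 < C) (hα : -(1 / 2) < α) :
    Tendsto (fun N => thresholdNum C tT tN E α N / N ^ (α + 1 / 2 + 1)) atTop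
      (𝓝 ((E * tT / C ^ (α - 1 / 2) + E * tN) / C)) := by
  have hlim : Tendsto (fun N : ℝ => (E * (1 + N⁻¹) * tT / C ^ (α - 1 / 2) + E * tN
      + tN * tT * N ^ (-(α + 1 / 2))) / C) atTop
      (𝓝 ((E * (1 + 0) * tT / C ^ (α - 1 / 2) + E * tN + tN * tT * 0) / C)) :=
    ((((tendsto_const_nhds.add tendsto_inv_atTop_zero).const_mul E |>.mul_const tT
      |>.div_const _).add_const _).add
      ((tendsto_rpow_neg_atTop (by linarith)).const_mul _)).div_const C
  rw [add_zero, mul_one, mul_zero, add_zero] at hlim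
  refine hlim.congr' ?_
  filter_upwards [eventually_gt_atTop 0] with N hN
  have hsplit : N ^ (α + 1 / 2) = N ^ (α - 1 / 2) * N := by
    rw [← rpow_add_one hN.ne']; ring_nf
  have hpow : 0 < N ^ (α - 1 / 2) := rpow_pos_of_pos hN _
  rw [thresholdNum, div_rpow hN.le hC.le, rpow_neg hN.le, rpow_add_one hN.ne', hsplit]
  field_simp

theorem tendsto_thresholdDen_div_self (hC : 0 < C) (hα : α < 1 / 2) :
    Tendsto (fun N => thresholdDen C tT tN E α N / N) atTop (𝓝 (tT * tN * (1 - 1 / C))) := by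
  have hlim : Tendsto (fun N : ℝ => tT * tN * (1 - (1 + N⁻¹) / C)
      - (E * tN + E * (1 + N⁻¹) * tT / C ^ (α + 1 / 2)) * N ^ (α - 1 / 2)) atTop
      (𝓝 (tT * tN * (1 - (1 + 0) / C) - (E * tN + E * (1 + 0) * tT / C ^ (α + 1 / 2)) * 0)) :=
    ((tendsto_const_nhds.add tendsto_inv_atTop_zero).div_const C |>.const_sub 1 |>.const_mul _).sub
      ((tendsto_const_nhds.add (((tendsto_const_nhds.add tendsto_inv_atTop_zero).const_mul E
        |>.mul_const tT).div_const _)).mul (tendsto_rpow_atTop_nhds_zero_of_neg (by linarith)))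
  rw [add_zero, mul_zero, sub_zero] at hlim
  refine hlim.congr' ?_
  filter_upwards [eventually_gt_atTop 0] with N hN
  have hsplit : N ^ (α + 1 / 2) = N ^ (α - 1 / 2) * N := by
    rw [← rpow_add_one hN.ne']; ring_nf
  rw [thresholdDen, div_rpow hN.le hC.le, hsplit]
  field_simp
  ring

end Threshold

theorem stmt_18 (C tT tN E α : ℝ) (hC : 1 < C) (htT : 0 < tT) (htN : 0 < tN)
    (hE : 0 ≤ E) (hα0 : 0 < α) (hα1 : α < 1 / 2)
    (NT NN num den Λ : ℝ → ℝ)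
    (hNT : ∀ N, NT N = N) (hNN : ∀ N, NN N = N / C)
    (hnum : ∀ N, num N = NT N * NN N *
      (E * (1 + 1 / NT N) * tT * NN N ^ (α - 1 / 2) + E * tN * NT N ^ (α - 1 / 2)
        + tN * tT / NT N))
    (hden : ∀ N, den N = tT * tN * (NT N - NN N * (1 + 1 / NT N))
      - E * tN * NT N ^ (α + 1 / 2) - E * (1 + 1 / NT N) * tT * NN N ^ (α + 1 / 2))
    (hΛ : ∀ N, Λ N = num N / den N) :
    ∃ K > (0 : ℝ), ∃ N₀ : ℝ, 1 ≤ N₀ ∧ ∀ N ≥ N₀,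
      0 < den N ∧ 0 < Λ N ∧ Λ N ≤ K * N ^ (α + 1 / 2) := by
  have hC0 : 0 < C := one_pos.trans hC
  have hnum' : ∀ N, thresholdNum C tT tN E α N = num N := by
    intro N; rw [hnum, hNT, hNN, thresholdNum]
  have hden' : ∀ N, thresholdDen C tT tN E α N = den N := by
    intro N; rw [hden, hNT, hNN, thresholdDen]
  have hc : 0 < tT * tN * (1 - 1 / C) :=
    mul_pos (mul_pos htT htN) (sub_pos.2 ((div_lt_one hC0).2 hC))
  have hnum_pos : ∀ᶠ N in atTop, 0 < num N := by
    filter_upwards [eventually_gt_atTop 0] with N hN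
    exact hnum' N ▸ thresholdNum_pos C tT tN E α hC0 htT htN hE hN
  obtain ⟨K, hK, hbound⟩ := eventually_div_le_mul_rpow (num := num) (den := den) hc
    ((tendsto_thresholdNum_div_rpow C tT tN E α hC0 (by linarith)).congr fun N => by rw [hnum'])
    ((tendsto_thresholdDen_div_self C tT tN E α hC0 hα1).congr fun N => by rw [hden'])
    hnum_pos
  obtain ⟨N₀, hN₀⟩ := eventually_atTop.1 hbound
  refine ⟨K, hK, max N₀ 1, le_max_right _ _, fun N hN => ?_⟩
  simpa only [hΛ] using hN₀ N (le_of_max_le_left hN)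
end

section
/- Let N_T > N_N > 0, θ_T > θ_N > 0, and Ē with (θ_T − θ_N)/2 < Ē < ((N_T − N_N)/(N_T + N_N))·θ_N. Define λ_L = N_T N_N(θ_N − θ_T + 2Ē)/(N_T(θ_T − Ē) − N_N(θ_N + Ē)). If N_T/N_N is held equal to a constant ratio C > 1 while N_T grows, then λ_L = Θ(N_T); i.e., there exist constants 0 < c₁ ≤ c₂ and N₀ such that c₁·N_T ≤ λ_L ≤ c₂·N_T for all N_T ≥ N₀. -/
/-!
Holding `N_N = N_T / C` fixed in ratio, both numerator and denominator of `λ_L` scale out one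
factor of `N_T`, so `λ_L` is exactly linear: `λ_L = k N_T` with
`k = (θ_N - θ_T + 2Ē) / (C(θ_T - Ē) - (θ_N + Ē))`. The lower noise bound makes the numerator of
`k` positive and the upper one its denominator, so `c₁ = c₂ = k` works.
-/

lemma mul_div_mul_div_sub_eq_mul {C N a b d : ℝ} (hC : C ≠ 0) (hN : N ≠ 0) :
    N * (N / C) * a / (N * b - N / C * d) = a / (C * b - d) * N := by
  have hden : N * b - N / C * d = N * (C * b - d) / C := by field_simp
  rw [hden, div_div_eq_mul_div, div_mul_eq_mul_div]
  rw [show N * (N / C) * a * C = N * (N * a) by field_simp, mul_div_mul_left _ _ hN]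
  ring

lemma trend_denominator_pos {C tT tN E : ℝ} (hC : 1 < C) (htT : tN < tT)
    (hE2 : E < (C - 1) / (C + 1) * tN) : 0 < C * (tT - E) - (tN + E) := by
  have hE2' : E * (C + 1) < (C - 1) * tN := by
    rwa [div_mul_eq_mul_div, lt_div_iff₀ (by linarith)] at hE2
  nlinarith

theorem stmt_19_general (C tT tN E : ℝ) (hC : 1 < C) (htT : tN < tT)
    (hE1 : (tT - tN) / 2 < E) (hE2 : E < (C - 1) / (C + 1) * tN)
    (lamL : ℝ → ℝ)
    (hlamL : ∀ NT, lamL NT = NT * (NT / C) * (tN - tT + 2 * E) /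
      (NT * (tT - E) - (NT / C) * (tN + E))) :
    ∃ c₁ c₂ : ℝ, 0 < c₁ ∧ c₁ ≤ c₂ ∧ ∃ N₀ : ℝ, 0 < N₀ ∧
      ∀ NT ≥ N₀, c₁ * NT ≤ lamL NT ∧ lamL NT ≤ c₂ * NT := by
  set k := (tN - tT + 2 * E) / (C * (tT - E) - (tN + E))
  have hk : 0 < k := div_pos (by linarith) (trend_denominator_pos hC htT hE2)
  refine ⟨k, k, hk, le_rfl, 1, one_pos, fun NT hNT => ?_⟩
  have hlin : lamL NT = k * NT := by
    rw [hlamL NT, mul_div_mul_div_sub_eq_mul (by linarith) (by linarith)]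
  exact ⟨hlin.ge, hlin.le⟩

theorem stmt_19 (C tT tN E : ℝ) (hC : 1 < C) (htN : 0 < tN) (htT : tN < tT)
    (hE1 : (tT - tN) / 2 < E) (hE2 : E < (C - 1) / (C + 1) * tN)
    (lamL : ℝ → ℝ)
    (hlamL : ∀ NT, lamL NT = NT * (NT / C) * (tN - tT + 2 * E) /
      (NT * (tT - E) - (NT / C) * (tN + E))) :
    ∃ c₁ c₂ : ℝ, 0 < c₁ ∧ c₁ ≤ c₂ ∧ ∃ N₀ : ℝ, 0 < N₀ ∧
      ∀ NT ≥ N₀, c₁ * NT ≤ lamL NT ∧ lamL NT ≤ c₂ * NT :=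
  stmt_19_general C tT tN E hC htT hE1 hE2 lamL hlamL
end
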